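/- arXiv:1409.6358 — 2 statements merged into one kernel-verified Lean document; each statement's English description precedes it below -/
import Mathlib

section
/- Let Ā = X' V Σ⁻¹ U* where X = U Σ V* is a compact SVD of X with U ∈ ℝ^{n×r}, and let à = U* Ā U = U* X' V Σ⁻¹. If w is an eigenvector of à with eigenvalue λ ≠ 0, then φ := X' V Σ⁻¹ w is an eigenvector of Ā with the same eigenvalue λ. -/
open Matrix

/-- If `w` is an eigenvector of the reduced DMD operator `Ã = Uᵀ Ā U = Uᵀ X' V Σ⁻¹`
with nonzero eigenvalue `λ`, then `φ = X' V Σ⁻¹ w` is a (nonzero) eigenvector of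
the full DMD operator `Ā = X' V Σ⁻¹ Uᵀ` with the same eigenvalue. -/
theorem dmd_mode_eigenvector {n m r : ℕ}
    (X X' : Matrix (Fin n) (Fin m) ℝ)
    (U : Matrix (Fin n) (Fin r) ℝ) (V : Matrix (Fin m) (Fin r) ℝ)
    (d : Fin r → ℝ) (hd : ∀ i, d i ≠ 0)
    (hU : Uᵀ * U = 1) (hV : Vᵀ * V = 1)
    (hX : X = U * Matrix.diagonal d * Vᵀ)
    (Abar : Matrix (Fin n) (Fin n) ℝ)
    (hAbar : Abar = X' * V * (Matrix.diagonal d)⁻¹ * Uᵀ)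
    (Atil : Matrix (Fin r) (Fin r) ℝ)
    (hAtil : Atil = Uᵀ * X' * V * (Matrix.diagonal d)⁻¹)
    (lam : ℝ) (hlam : lam ≠ 0)
    (w : Fin r → ℝ) (hw : w ≠ 0)
    (heig : Atil.mulVec w = lam • w)
    (phi : Fin n → ℝ)
    (hphi : phi = (X' * V * (Matrix.diagonal d)⁻¹).mulVec w) :
    phi ≠ 0 ∧ Abar.mulVec phi = lam • phi := by
  have hUphi : Uᵀ.mulVec phi = lam • w := by
    rw [hphi, Matrix.mulVec_mulVec, ← Matrix.mul_assoc, ← Matrix.mul_assoc, ← hAtil, heig]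
  constructor
  · intro h
    rw [h, Matrix.mulVec_zero] at hUphi
    exact hw (by simpa [smul_eq_zero, hlam] using hUphi.symm)
  · rw [hAbar, ← Matrix.mulVec_mulVec, hUphi, Matrix.mulVec_smul, ← hphi]
end

section
/- Let Ā = X' V Σ⁻¹ U* (DMD operator from compact SVD X = U Σ V*, U ∈ ℝ^{n×r}) and à = U* Ā U ∈ ℝ^{r×r}. Then every nonzero eigenvalue of Ā is an eigenvalue of Ã, and conversely every nonzero eigenvalue of à is an eigenvalue of Ā. -/
open Matrix

/-- Nonzero eigenvalues of the full DMD operator `Ā = X' V Σ⁻¹ Uᴴ` and of its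
rank-`r` projection `Ã = Uᴴ Ā U = Uᴴ X' V Σ⁻¹` coincide. -/
theorem dmd_eigenvalues_agree {n m r : ℕ}
    (X X' : Matrix (Fin n) (Fin m) ℂ)
    (U : Matrix (Fin n) (Fin r) ℂ) (V : Matrix (Fin m) (Fin r) ℂ)
    (S : Matrix (Fin r) (Fin r) ℂ) (hSdiag : S.IsDiag) (hS : IsUnit S)
    (hU : Uᴴ * U = 1) (hV : Vᴴ * V = 1)
    (hX : X = U * S * Vᴴ)
    (Abar : Matrix (Fin n) (Fin n) ℂ)
    (hAbar : Abar = X' * V * S⁻¹ * Uᴴ)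
    (Atil : Matrix (Fin r) (Fin r) ℂ)
    (hAtil : Atil = Uᴴ * Abar * U)
    (lam : ℂ) (hlam : lam ≠ 0) :
    (∃ v : Fin n → ℂ, v ≠ 0 ∧ Abar.mulVec v = lam • v) ↔
      (∃ w : Fin r → ℂ, w ≠ 0 ∧ Atil.mulVec w = lam • w) := by
  set P : Matrix (Fin n) (Fin r) ℂ := X' * V * S⁻¹ with hP
  set Q : Matrix (Fin r) (Fin n) ℂ := Uᴴ with hQ
  have hPQ : Abar = P * Q := hAbar
  have hQP : Atil = Q * P := by
    rw [hAtil, hPQ, hQ]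
    rw [Matrix.mul_assoc, Matrix.mul_assoc, hU, Matrix.mul_one, ← Matrix.mul_assoc]
  constructor
  · rintro ⟨v, hv, hev⟩
    refine ⟨Q.mulVec v, ?_, ?_⟩
    · intro h0
      have : P.mulVec (Q.mulVec v) = 0 := by rw [h0, Matrix.mulVec_zero]
      rw [Matrix.mulVec_mulVec, ← hPQ, hev] at this
      exact hv (by simpa [smul_eq_zero, hlam] using this)
    · have hev' : P *ᵥ (Q *ᵥ v) = lam • v := by
        rw [Matrix.mulVec_mulVec, ← hPQ]; exact hev
      rw [hQP, ← Matrix.mulVec_mulVec, hev', Matrix.mulVec_smul]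
  · rintro ⟨w, hw, hew⟩
    refine ⟨P.mulVec w, ?_, ?_⟩
    · intro h0
      have : Q.mulVec (P.mulVec w) = 0 := by rw [h0, Matrix.mulVec_zero]
      rw [Matrix.mulVec_mulVec, ← hQP, hew] at this
      exact hw (by simpa [smul_eq_zero, hlam] using this)
    · have hew' : Q *ᵥ (P *ᵥ w) = lam • w := by
        rw [Matrix.mulVec_mulVec, ← hQP]; exact hew
      rw [hPQ, ← Matrix.mulVec_mulVec, hew', Matrix.mulVec_smul]
end
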